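/- arXiv:2409.07412 — 2 statements merged into one kernel-verified Lean document; each statement's English description precedes it below -/
import Mathlib

section
/- Let p ∈ ℝ^c be a probability vector (all entries nonnegative, summing to 1) and let P = diag(p₁,...,p_c). Then the kernel of the matrix P - pᵀp equals the span of the all-ones vector (1,...,1) together with the span of the standard basis vectors Eᵢ for all indices i with pᵢ = 0. -/
open Matrix

theorem ker_P_sub_ppT (c : ℕ) (p : Fin c → ℝ)
    (hp0 : ∀ i, 0 ≤ p i) (hp1 : ∑ i, p i = 1) :
    LinearMap.ker (Matrix.diagonal p - Matrix.vecMulVec p p).mulVecLin =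
      Submodule.span ℝ {(fun _ => 1 : Fin c → ℝ)} ⊔
        Submodule.span ℝ {v : Fin c → ℝ | ∃ i, p i = 0 ∧ v = Pi.single i 1} := by
  have hA : ∀ v : Fin c → ℝ, ∀ i,
      ((Matrix.diagonal p - Matrix.vecMulVec p p).mulVec v) i
        = p i * v i - p i * ∑ j, p j * v j := by
    intro v i
    simp only [Matrix.mulVec, dotProduct, Matrix.sub_apply, Matrix.vecMulVec_apply,
      sub_mul, Finset.sum_sub_distrib]
    congr 1
    · rw [Finset.sum_eq_single i]
      · rw [Matrix.diagonal_apply_eq]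
      · intro b _ hbi
        rw [Matrix.diagonal_apply_ne' p hbi, zero_mul]
      · simp
    · rw [Finset.mul_sum]
      exact Finset.sum_congr rfl fun x _ => by ring
  apply le_antisymm
  · intro v hv
    have hv' : ∀ i, p i * v i - p i * ∑ j, p j * v j = 0 := by
      intro i
      have h := congrFun (LinearMap.mem_ker.mp hv) i
      rw [Matrix.mulVecLin_apply] at h
      rw [← hA v i]; exact h
    set s := ∑ j, p j * v j with hs
    have hkey : ∀ i, p i ≠ 0 → v i = s := by
      intro i hi
      have h := hv' i
      have h2 : p i * (v i - s) = 0 := by ring_nf; ring_nf at h; linarith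
      rcases mul_eq_zero.mp h2 with h | h
      · exact absurd h hi
      · linarith
    have hone : (fun _ => (1:ℝ) : Fin c → ℝ) ∈
        Submodule.span ℝ {(fun _ => 1 : Fin c → ℝ)} := Submodule.subset_span rfl
    have hdecomp : v = s • (fun _ => (1:ℝ)) + (v - s • fun _ => (1:ℝ)) := by
      funext i; simp
    rw [hdecomp]
    apply Submodule.add_mem
    · exact Submodule.mem_sup_left (Submodule.smul_mem _ _ hone)
    · apply Submodule.mem_sup_right
      set w : Fin c → ℝ := v - s • fun _ => (1:ℝ) with hw
      have hwz : ∀ i, p i ≠ 0 → w i = 0 := by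
        intro i hi; simp [hw, hkey i hi]
      have hsum : w = ∑ i ∈ Finset.univ.filter (fun i => p i = 0), w i • (Pi.single i (1:ℝ) : Fin c → ℝ) := by
        funext j
        rw [Finset.sum_apply]
        by_cases hpj : p j = 0
        · rw [Finset.sum_eq_single j]
          · simp
          · intro b _ hbj; simp [Pi.single_apply, hbj]
          · intro h; simp [hpj] at h
        · rw [hwz j hpj]
          refine (Finset.sum_eq_zero ?_).symm
          intro b hb
          simp only [Finset.mem_filter] at hb
          have hbj : b ≠ j := fun h => hpj (h ▸ hb.2)
          simp [Pi.single_apply, hbj]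
      rw [hsum]
      apply Submodule.sum_mem
      intro i hi
      simp only [Finset.mem_filter] at hi
      exact Submodule.smul_mem _ _ (Submodule.subset_span ⟨i, hi.2, rfl⟩)
  · rw [sup_le_iff]
    constructor
    · rw [Submodule.span_le]
      rintro x rfl
      rw [SetLike.mem_coe, LinearMap.mem_ker]
      funext i
      rw [Matrix.mulVecLin_apply, hA]
      simp [hp1]
    · rw [Submodule.span_le]
      rintro x ⟨i, hpi, rfl⟩
      rw [SetLike.mem_coe, LinearMap.mem_ker]
      funext j
      rw [Matrix.mulVecLin_apply, hA]
      have hsum : ∑ k, p k * (Pi.single i (1:ℝ) : Fin c → ℝ) k = p i := by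
        rw [Finset.sum_eq_single i]
        · simp
        · intro b _ hbi; simp [Pi.single_apply, hbi]
        · simp
      rw [hsum, hpi]
      by_cases hji : j = i
      · subst hji; simp [hpi]
      · simp [Pi.single_apply, hji]
end

section
/- Let p ∈ ℝ^c be a probability vector with all entries strictly positive, and let P = diag(p). Then the kernel of P - pᵀp is one-dimensional, spanned by the all-ones vector. -/
open Matrix

theorem ker_P_sub_ppT_pos (c : ℕ) (p : Fin c → ℝ)
    (hp0 : ∀ i, 0 < p i) (hp1 : ∑ i, p i = 1) :
    LinearMap.ker (Matrix.diagonal p - Matrix.vecMulVec p p).mulVecLin =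
      Submodule.span ℝ {(fun _ => 1 : Fin c → ℝ)} ∧
    Module.finrank ℝ
      (LinearMap.ker (Matrix.diagonal p - Matrix.vecMulVec p p).mulVecLin) = 1 := by
  have hc : c ≠ 0 := by
    rintro rfl
    simp at hp1
  have hone : (fun _ => 1 : Fin c → ℝ) ≠ 0 := by
    intro h
    have := congrFun h ⟨0, Nat.pos_of_ne_zero hc⟩
    simp at this
  have key : ∀ v : Fin c → ℝ,
      ((Matrix.diagonal p - Matrix.vecMulVec p p).mulVec v)
        = fun i => p i * v i - p i * (∑ j, p j * v j) := by
    intro v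
    funext i
    simp [Matrix.sub_mulVec, Matrix.mulVec, Matrix.vecMulVec, dotProduct,
      Matrix.diagonal, Finset.mul_sum, mul_assoc, sub_mul, Finset.sum_sub_distrib,
      ite_mul, Finset.sum_ite_eq]
  have hker : LinearMap.ker (Matrix.diagonal p - Matrix.vecMulVec p p).mulVecLin =
      Submodule.span ℝ {(fun _ => 1 : Fin c → ℝ)} := by
    ext v
    rw [LinearMap.mem_ker, Matrix.mulVecLin_apply, key, Submodule.mem_span_singleton]
    constructor
    · intro h
      set S := ∑ j, p j * v j with hS
      have hv : ∀ i, v i = S := by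
        intro i
        have hi := congrFun h i
        simp only [Pi.zero_apply] at hi
        have : p i * (v i - S) = 0 := by ring_nf; linarith [hi]
        rcases mul_eq_zero.mp this with h' | h'
        · exact absurd h' (ne_of_gt (hp0 i))
        · linarith
      exact ⟨S, by funext i; simp [hv i]⟩
    · rintro ⟨a, rfl⟩
      funext i
      have : ∑ j, p j * (a • (fun _ => 1 : Fin c → ℝ)) j = a := by
        simp [Finset.sum_mul, ← Finset.sum_mul, hp1]
      simp [← Finset.sum_mul, hp1]
  refine ⟨hker, ?_⟩
  rw [hker]
  exact finrank_span_singleton hone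
end
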